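/- For every set F ⊆ ℝ^d, the packing dimension equals the modified generalized upper box dimension: dim_P F = \overline{dim}_MGB F := inf{ sup_{i≥1} \overline{dim}_GB F_i : F ⊆ ⋃_{i=1}^{∞} F_i }, where the infimum is over countable covers of F by subsets of ℝ^d. -/

import Mathlib

open Filter Metric Set Topology Bornology ENNReal

noncomputable section

variable {X : Type*} [PseudoMetricSpace X]

/-- `coveringNumber r E` is the smallest number of closed balls of radius `r`
needed to cover `E` (with value `⊤` if no finite cover exists). -/
def coveringNumber (r : ℝ) (E : Set X) : ℕ∞ :=
  sInf {n : ℕ∞ | ∃ t : Finset X, (E ⊆ ⋃ x ∈ t, closedBall x r) ∧ (t.card : ℕ∞) = n}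

/-- The Assouad spectrum `dim_A^θ F`. -/
def assouadSpectrum (θ : ℝ) (F : Set X) : ℝ :=
  sInf {s : ℝ | 0 ≤ s ∧ ∃ C > (0 : ℝ), ∀ R : ℝ, 0 < R → R < 1 → ∀ x ∈ F,
    (coveringNumber (R ^ (1 / θ)) (closedBall x R ∩ F) : ℝ≥0∞)
      ≤ ENNReal.ofReal (C * (R / R ^ (1 / θ)) ^ s)}

/-- The upper spectrum `\overline{dim}_A^θ F`. -/
def upperSpectrum (θ : ℝ) (F : Set X) : ℝ :=
  sInf {s : ℝ | 0 ≤ s ∧ ∃ C > (0 : ℝ), ∀ r R : ℝ, 0 < r → r ≤ R ^ (1 / θ) →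
    R ^ (1 / θ) < R → R < 1 → 0 < R → ∀ x ∈ F,
    (coveringNumber r (closedBall x R ∩ F) : ℝ≥0∞) ≤ ENNReal.ofReal (C * (R / r) ^ s)}

/-- The generalized upper box dimension `\overline{dim}_{GB} F := limsup_{θ → 0⁺} dim_A^θ F`. -/
def genUpperBoxDim (F : Set X) : ℝ :=
  limsup (fun θ : ℝ => assouadSpectrum θ F) (𝓝[>] (0 : ℝ))

/-- The quasi-Assouad dimension `dim_{qA} F := lim_{θ → 1⁻} \overline{dim}_A^θ F`
(the limit exists by monotonicity, hence equals the limsup). -/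
def quasiAssouadDim (F : Set X) : ℝ :=
  limsup (fun θ : ℝ => upperSpectrum θ F) (𝓝[<] (1 : ℝ))

/-- The upper box dimension `\overline{dim}_B F := limsup_{δ → 0⁺} log N_δ(F) / (- log δ)`. -/
def upperBoxDim (F : Set X) : ℝ :=
  limsup (fun δ : ℝ => Real.log ((coveringNumber δ F).toNat : ℝ) / (- Real.log δ))
    (𝓝[>] (0 : ℝ))

/-- The Assouad dimension `dim_A F`. -/
def assouadDim (F : Set X) : ℝ :=
  sInf {s : ℝ | 0 ≤ s ∧ ∃ C > (0 : ℝ), ∃ ρ > (0 : ℝ), ∀ r R : ℝ, 0 < r → r < R → R < ρ →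
    ∀ x ∈ F, (coveringNumber r (closedBall x R ∩ F) : ℝ≥0∞) ≤ ENNReal.ofReal (C * (R / r) ^ s)}

/-- The packing pre-measure at scale `δ`: the supremum of `∑ |B_i|^s` over at most countable
collections of disjoint closed balls of radii at most `δ` (and positive) with centres in `F`,
where `|B_i| = 2 r_i` is the diameter. -/
def packingPre (s δ : ℝ) (F : Set X) : ℝ≥0∞ :=
  ⨆ (D : Set (X × ℝ)) (_ : D.Countable)
    (_ : ∀ p ∈ D, p.1 ∈ F ∧ 0 < p.2 ∧ p.2 ≤ δ)
    (_ : D.Pairwise fun p q => Disjoint (closedBall p.1 p.2) (closedBall q.1 q.2)),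
    ∑' p : D, ENNReal.ofReal ((2 * (p : X × ℝ).2) ^ s)

/-- `𝒫₀^s(F) := lim_{δ → 0} 𝒫_δ^s(F)`; the limit exists by monotonicity and equals the inf. -/
def packingPre₀ (s : ℝ) (F : Set X) : ℝ≥0∞ :=
  ⨅ (δ : ℝ) (_ : 0 < δ), packingPre s δ F

/-- The packing (outer) measure `𝒫^s(F)`. -/
def packingMeasure (s : ℝ) (F : Set X) : ℝ≥0∞ :=
  ⨅ (G : ℕ → Set X) (_ : F ⊆ ⋃ i, G i), ∑' i, packingPre₀ s (G i)

/-- The packing dimension `dim_P F = inf {s ≥ 0 : 𝒫^s(F) = 0}`. -/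
def packingDim (F : Set X) : ℝ :=
  sInf {s : ℝ | 0 ≤ s ∧ packingMeasure s F = 0}

/-!
If `dim_GB E < s₁ < s`, the Assouad spectrum gives, for small `θ`, covers of `B(x, R) ∩ E` by
`≲ (R / R^{1/θ})^{s₁}` balls of radius `R^{1/θ}`. Covering a bounded piece of `E` by `≲ R^{-d}`
balls of radius `R = ρ^θ` centred in `E` (a volume count) and each of those by `ρ`-balls gives
`N_ρ ≲ ρ^{-(θd + (1-θ)s₁)}`, an exponent below `s` for small `θ`; counting the balls of a packing
scale by scale then shows `𝒫₀^s = 0` on bounded pieces. Hence `𝒫^s(F) = 0` as soon as `F` is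
covered by countably many sets of generalized upper box dimension `< s`.

Conversely, if `𝒫^s(F) = 0` then `F` is covered by sets `G_i` with `𝒫₀^s(G_i) < 1`. A
`ρ`-separated subset of `G_i` carries a packing by balls of radius `ρ/2`, so `N_ρ(G_i) ≲ ρ^{-s}`,
whence `dim_A^θ G_i ≤ s / (1 - θ)` and `dim_GB G_i ≤ s`.
-/

open scoped NNReal

section CoveringNumber

variable {r : ℝ} {E : Set X}

lemma coveringNumber_le_card {t : Finset X} (h : E ⊆ ⋃ x ∈ t, closedBall x r) :
    coveringNumber r E ≤ t.card :=
  sInf_le ⟨t, h, rfl⟩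

lemma coveringNumber_mono {E' : Set X} (h : E ⊆ E') :
    coveringNumber r E ≤ coveringNumber r E' :=
  sInf_le_sInf fun _ ⟨t, ht, htn⟩ => ⟨t, h.trans ht, htn⟩

lemma coveringNumber_anti {r' : ℝ} (h : r ≤ r') (E : Set X) :
    coveringNumber r' E ≤ coveringNumber r E :=
  sInf_le_sInf fun _ ⟨t, ht, htn⟩ =>
    ⟨t, ht.trans (iUnion₂_mono fun _ _ => closedBall_subset_closedBall h), htn⟩

lemma exists_finset_card_eq_coveringNumber (h : coveringNumber r E ≠ ⊤) :
    ∃ t : Finset X, E ⊆ ⋃ x ∈ t, closedBall x r ∧ (t.card : ℕ∞) = coveringNumber r E := by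
  refine csInf_mem (s := {n : ℕ∞ | ∃ t : Finset X, E ⊆ ⋃ x ∈ t, closedBall x r ∧ (t.card : ℕ∞) = n})
    (nonempty_iff_ne_empty.mpr fun hempty => h ?_)
  rw [_root_.coveringNumber, hempty, sInf_empty]

lemma coveringNumber_le_ofReal_iff {c : ℝ} (hc : 0 ≤ c) :
    (coveringNumber r E : ℝ≥0∞) ≤ ENNReal.ofReal c ↔
      ∃ t : Finset X, E ⊆ ⋃ x ∈ t, closedBall x r ∧ (t.card : ℝ) ≤ c := by
  constructor
  · intro h
    have hfin : coveringNumber r E ≠ ⊤ := by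
      rintro htop
      simp [htop] at h
    obtain ⟨t, ht, hcard⟩ := exists_finset_card_eq_coveringNumber hfin
    refine ⟨t, ht, ?_⟩
    rw [← ENNReal.ofReal_le_ofReal_iff hc, ENNReal.ofReal_natCast]
    simpa [← hcard] using h
  · rintro ⟨t, ht, hcard⟩
    calc (coveringNumber r E : ℝ≥0∞) ≤ (t.card : ℕ∞) := by exact_mod_cast coveringNumber_le_card ht
      _ = ENNReal.ofReal t.card := by simp
      _ ≤ ENNReal.ofReal c := ENNReal.ofReal_le_ofReal hcard

lemma coveringNumber_le_card_mul {ι : Type*} {t : Finset ι} {S : ι → Set X} {c : ℝ} (hc : 0 ≤ c)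
    (hE : E ⊆ ⋃ y ∈ t, S y) (hS : ∀ y ∈ t, (coveringNumber r (S y) : ℝ≥0∞) ≤ ENNReal.ofReal c) :
    (coveringNumber r E : ℝ≥0∞) ≤ ENNReal.ofReal (t.card * c) := by
  classical
  choose! u hu hcard using fun y hy => (coveringNumber_le_ofReal_iff hc).mp (hS y hy)
  refine (coveringNumber_le_ofReal_iff (by positivity)).mpr ⟨t.biUnion u, ?_, ?_⟩
  · refine hE.trans (iUnion₂_subset fun y hy => (hu y hy).trans ?_)
    exact biUnion_subset_biUnion_left fun x hx => Finset.mem_biUnion.mpr ⟨y, hy, hx⟩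
  · calc ((t.biUnion u).card : ℝ) ≤ ∑ y ∈ t, ((u y).card : ℝ) := by
          exact_mod_cast Finset.card_biUnion_le
      _ ≤ ∑ _y ∈ t, c := Finset.sum_le_sum hcard
      _ = t.card * c := by simp

lemma coveringNumber_eq_externalCoveringNumber (hr : 0 ≤ r) (E : Set X) :
    coveringNumber r E = externalCoveringNumber r.toNNReal E := by
  refine le_antisymm (le_iInf₂ fun C hC => ?_) (le_sInf ?_)
  · rcases C.finite_or_infinite with hfin | hinf
    · rw [← hfin.coe_toFinset, Set.encard_coe_eq_coe_finsetCard]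
      exact coveringNumber_le_card (by simpa [hr] using hC.subset_iUnion_closedBall)
    · simp [hinf.encard_eq]
  · rintro _ ⟨t, ht, rfl⟩
    simpa using (IsCover.of_subset_iUnion_closedBall (N := (t : Set X)) (ε := r.toNNReal)
      (by simpa [hr] using ht)).externalCoveringNumber_le_encard

lemma isSeparated_ofReal_iff {ε : ℝ} (hε : 0 ≤ ε) {s : Set X} :
    IsSeparated (ENNReal.ofReal ε) s ↔ s.Pairwise fun a b => ε < dist a b := by
  refine forall₄_congr fun a _ b _ => imp_congr_right fun _ => ?_
  simp only [edist_dist, ENNReal.ofReal_lt_ofReal_iff']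
  exact ⟨And.left, fun h => ⟨h, hε.trans_lt h⟩⟩

lemma card_le_coveringNumber_of_separated (hr : 0 ≤ r) {u : Finset X} (hu : ↑u ⊆ E)
    (hsep : (u : Set X).Pairwise fun a b => 2 * r < dist a b) :
    (u.card : ℕ∞) ≤ coveringNumber r E := by
  have hsep' : IsSeparated (2 * r.toNNReal : ℝ≥0) (u : Set X) := by
    have : ((2 * r.toNNReal : ℝ≥0) : ℝ≥0∞) = ENNReal.ofReal (2 * r) := by
      rw [ENNReal.ofReal, Real.toNNReal_mul zero_le_two]; simp
    rw [this, isSeparated_ofReal_iff (by positivity)]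
    exact hsep
  rw [coveringNumber_eq_externalCoveringNumber hr, ← encard_coe_eq_coe_finsetCard]
  exact (hsep'.encard_le_packingNumber hu).trans
    (packingNumber_two_mul_le_externalCoveringNumber _ _)

lemma exists_finset_subset_cover_card_le {ε c : ℝ} (hε : 0 ≤ ε)
    (h : ∀ u : Finset X, ↑u ⊆ E → (u : Set X).Pairwise (fun a b => ε < dist a b) →
      (u.card : ℝ) ≤ c) :
    ∃ t : Finset X, ↑t ⊆ E ∧ E ⊆ ⋃ y ∈ t, closedBall y ε ∧ (t.card : ℝ) ≤ c := by
  have hc : 0 ≤ c := by simpa using h ∅ (by simp) (by simp)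
  have hpack : packingNumber ε.toNNReal E ≤ ⌊c⌋₊ := by
    refine iSup₂_le fun C hCE => iSup_le fun hC => ?_
    by_contra! hlt
    obtain ⟨D, hDC, hD⟩ := exists_subset_encard_eq (Order.add_one_le_of_lt hlt)
    have hDfin : D.Finite := finite_of_encard_eq_coe hD
    have hcard := h hDfin.toFinset (by simpa using hDC.trans hCE)
      (by simpa using (isSeparated_ofReal_iff hε).mp (hC.subset hDC))
    rw [hDfin.encard_eq_coe_toFinset_card] at hD
    rw [show hDfin.toFinset.card = ⌊c⌋₊ + 1 by exact_mod_cast hD] at hcard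
    exact (Nat.lt_floor_add_one c).not_ge (by exact_mod_cast hcard)
  have hfin : packingNumber ε.toNNReal E ≠ ⊤ := ne_top_of_le_ne_top (by simp) hpack
  have hM : (maximalSeparatedSet ε.toNNReal E).Finite :=
    finite_of_encard_le_coe ((encard_maximalSeparatedSet hfin).trans_le hpack)
  refine ⟨hM.toFinset, by simpa using maximalSeparatedSet_subset, ?_, ?_⟩
  · simpa [hε] using (isCover_maximalSeparatedSet hfin).subset_iUnion_closedBall
  · have : (hM.toFinset.card : ℕ∞) ≤ ⌊c⌋₊ := by
      rw [← hM.encard_eq_coe_toFinset_card, encard_maximalSeparatedSet hfin]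
      exact hpack
    exact (Nat.cast_le.mpr (by exact_mod_cast this)).trans (Nat.floor_le hc)

end CoveringNumber

section PackingPremeasure

variable {s δ : ℝ} {E : Set X}

lemma card_mul_le_packingPre {r : ℝ} (hr : 0 < r) (hrδ : r ≤ δ) {u : Finset X} (hu : ↑u ⊆ E)
    (hsep : (u : Set X).Pairwise fun a b => 2 * r < dist a b) :
    (u.card : ℝ≥0∞) * ENNReal.ofReal ((2 * r) ^ s) ≤ packingPre s δ E := by
  classical
  set v : Finset (X × ℝ) := u.image fun y => (y, r)
  have hinj : Function.Injective fun y : X => (y, r) := fun _ _ h => congrArg Prod.fst h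
  have hsum : ∑' p : (v : Set (X × ℝ)), ENNReal.ofReal ((2 * (p : X × ℝ).2) ^ s) =
      u.card * ENNReal.ofReal ((2 * r) ^ s) := by
    rw [Finset.tsum_subtype' v fun p => ENNReal.ofReal ((2 * p.2) ^ s),
      Finset.sum_image fun a _ b _ h => hinj h]
    simp
  rw [← hsum]
  refine le_iSup_of_le (v : Set (X × ℝ)) <| le_iSup_of_le v.finite_toSet.countable <|
    le_iSup_of_le ?_ <| le_iSup_of_le ?_ le_rfl
  · intro p hp
    obtain ⟨y, hy, rfl⟩ := Finset.mem_image.mp hp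
    exact ⟨hu hy, hr, hrδ⟩
  · intro p hp q hq hpq
    obtain ⟨a, ha, rfl⟩ := Finset.mem_image.mp hp
    obtain ⟨b, hb, rfl⟩ := Finset.mem_image.mp hq
    refine closedBall_disjoint_closedBall ?_
    linarith [hsep ha hb fun h => hpq (h ▸ rfl)]

lemma packingPre_le_of_forall_finset {B : ℝ≥0∞}
    (h : ∀ P : Finset (X × ℝ), (∀ p ∈ P, p.1 ∈ E ∧ 0 < p.2 ∧ p.2 ≤ δ) →
      (P : Set (X × ℝ)).PairwiseDisjoint (fun p => closedBall p.1 p.2) →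
      ∑ p ∈ P, ENNReal.ofReal ((2 * p.2) ^ s) ≤ B) :
    packingPre s δ E ≤ B := by
  refine iSup_le fun D => iSup_le fun _ => iSup_le fun hD => iSup_le fun hdisj => ?_
  rw [ENNReal.tsum_eq_iSup_sum]
  refine iSup_le fun S => ?_
  have := h (S.map (Function.Embedding.subtype _))
    (fun p hp => by obtain ⟨q, -, rfl⟩ := Finset.mem_map.mp hp; exact hD q q.2)
    (fun p hp q hq hpq => hdisj (by simp at hp; tauto) (by simp at hq; tauto) hpq)
  simpa using this

lemma coveringNumber_le_of_packingPre_le_one (h : packingPre s δ E ≤ 1) {ρ : ℝ} (hρ : 0 < ρ)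
    (hρδ : ρ ≤ 2 * δ) : (coveringNumber ρ E : ℝ≥0∞) ≤ ENNReal.ofReal (ρ ^ (-s)) := by
  refine (coveringNumber_le_ofReal_iff (by positivity)).mpr ?_
  obtain ⟨t, -, ht, hcard⟩ := exists_finset_subset_cover_card_le (c := ρ ^ (-s)) hρ.le
      fun u hu hsep => by
    have hle := (card_mul_le_packingPre (s := s) (half_pos hρ) (by linarith) hu
      (by rwa [mul_div_cancel₀ ρ two_ne_zero])).trans h
    rw [mul_div_cancel₀ _ two_ne_zero, ← ENNReal.ofReal_natCast,
      ← ENNReal.ofReal_mul (by positivity), ENNReal.ofReal_le_one] at hle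
    rwa [Real.rpow_neg hρ.le, ← one_div, le_div_iff₀ (by positivity)]
  exact ⟨t, ht, hcard⟩

lemma exists_coveringNumber_le_of_packingPre₀_lt_one (hs : 0 ≤ s) (h : packingPre₀ s E < 1) :
    ∃ C > 0, ∀ ρ : ℝ, 0 < ρ → ρ < 1 →
      (coveringNumber ρ E : ℝ≥0∞) ≤ ENNReal.ofReal (C * ρ ^ (-s)) := by
  obtain ⟨δ, hδ, hδE⟩ : ∃ δ > 0, packingPre s δ E < 1 := by simpa [packingPre₀, iInf_lt_iff] using h
  refine ⟨max 1 ((2 * δ) ^ (-s)), by positivity, fun ρ hρ hρ1 => ?_⟩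
  have hρs : 1 ≤ ρ ^ (-s) := Real.one_le_rpow_of_pos_of_le_one_of_nonpos hρ hρ1.le (by linarith)
  rcases le_or_gt ρ (2 * δ) with hρδ | hρδ
  · exact (coveringNumber_le_of_packingPre_le_one hδE.le hρ hρδ).trans
      (ENNReal.ofReal_le_ofReal (le_mul_of_one_le_left (by positivity) (le_max_left _ _)))
  · calc (coveringNumber ρ E : ℝ≥0∞) ≤ coveringNumber (2 * δ) E := by
          exact_mod_cast coveringNumber_anti hρδ.le E
      _ ≤ ENNReal.ofReal ((2 * δ) ^ (-s)) :=
          coveringNumber_le_of_packingPre_le_one hδE.le (by positivity) le_rfl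
      _ ≤ ENNReal.ofReal (max 1 ((2 * δ) ^ (-s)) * ρ ^ (-s)) :=
          ENNReal.ofReal_le_ofReal ((le_max_right _ _).trans
            (le_mul_of_one_le_right (by positivity) hρs))

end PackingPremeasure

section AssouadSpectrum

variable {θ s t C : ℝ} {F : Set X}

def HasAssouadSpectrumBound (θ s : ℝ) (F : Set X) : Prop :=
  ∃ C > (0 : ℝ), ∀ R : ℝ, 0 < R → R < 1 → ∀ x ∈ F,
    (coveringNumber (R ^ (1 / θ)) (closedBall x R ∩ F) : ℝ≥0∞)
      ≤ ENNReal.ofReal (C * (R / R ^ (1 / θ)) ^ s)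

lemma assouadSpectrum_eq_sInf (θ : ℝ) (F : Set X) :
    assouadSpectrum θ F = sInf {s | 0 ≤ s ∧ HasAssouadSpectrumBound θ s F} := rfl

lemma assouadSpectrum_nonneg (θ : ℝ) (F : Set X) : 0 ≤ assouadSpectrum θ F :=
  Real.sInf_nonneg fun _ hs => hs.1

lemma assouadSpectrum_le (hs : 0 ≤ s) (h : HasAssouadSpectrumBound θ s F) :
    assouadSpectrum θ F ≤ s := by
  rw [assouadSpectrum_eq_sInf]
  exact csInf_le ⟨0, fun _ h => h.1⟩ ⟨hs, h⟩

lemma one_le_div_rpow_one_div {R : ℝ} (hθ : θ ∈ Ioo 0 1) (hR : R ∈ Ioo 0 1) :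
    1 ≤ R / R ^ (1 / θ) := by
  have h1θ : 1 ≤ 1 / θ := by rw [le_div_iff₀ hθ.1]; linarith [hθ.2]
  rw [one_le_div (by positivity [hR.1])]
  simpa using Real.rpow_le_rpow_of_exponent_ge hR.1 hR.2.le h1θ

lemma HasAssouadSpectrumBound.mono {s' : ℝ} (hθ : θ ∈ Ioo 0 1)
    (h : HasAssouadSpectrumBound θ s F) (hss' : s ≤ s') : HasAssouadSpectrumBound θ s' F := by
  obtain ⟨C, hC, hbound⟩ := h
  refine ⟨C, hC, fun R hR0 hR1 x hx => (hbound R hR0 hR1 x hx).trans (ENNReal.ofReal_le_ofReal ?_)⟩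
  exact mul_le_mul_of_nonneg_left
    (Real.rpow_le_rpow_of_exponent_le (one_le_div_rpow_one_div hθ ⟨hR0, hR1⟩) hss') hC.le

lemma div_rpow_one_div_rpow {R : ℝ} (hR : 0 < R) (hθ : θ ∈ Ioo 0 1) (t : ℝ) :
    (R / R ^ (1 / θ)) ^ (t / (1 - θ)) = (R ^ (1 / θ)) ^ (-t) := by
  have hθ0 : θ ≠ 0 := hθ.1.ne'
  have h1θ : 1 - θ ≠ 0 := by linarith [hθ.2]
  have h1θ' : 1 - 1 / θ ≠ 0 := by
    have : 1 < 1 / θ := by rw [lt_div_iff₀ hθ.1]; linarith [hθ.2]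
    linarith
  rw [← Real.rpow_one_sub' hR.le h1θ', ← Real.rpow_mul hR.le, ← Real.rpow_mul hR.le]
  congr 1
  field_simp
  ring

lemma hasAssouadSpectrumBound_of_coveringNumber_le (hθ : θ ∈ Ioo 0 1) (hC : 0 < C)
    (h : ∀ ρ : ℝ, 0 < ρ → ρ < 1 → (coveringNumber ρ F : ℝ≥0∞) ≤ ENNReal.ofReal (C * ρ ^ (-t))) :
    HasAssouadSpectrumBound θ (t / (1 - θ)) F := by
  refine ⟨C, hC, fun R hR0 hR1 x _ => ?_⟩
  rw [div_rpow_one_div_rpow hR0 hθ]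
  have hr1 : R ^ (1 / θ) < 1 := Real.rpow_lt_one hR0.le hR1 (by positivity [hθ.1])
  exact (ENat.toENNReal_le.mpr (coveringNumber_mono inter_subset_right)).trans
    (h _ (by positivity) hr1)

lemma genUpperBoxDim_nonneg (F : Set X) : 0 ≤ genUpperBoxDim F := by
  rw [genUpperBoxDim, limsup_eq]
  refine Real.sInf_nonneg fun a (ha : ∀ᶠ θ in 𝓝[>] (0 : ℝ), assouadSpectrum θ F ≤ a) => ?_
  obtain ⟨θ, hθ⟩ := ha.exists
  exact (assouadSpectrum_nonneg θ F).trans hθ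

lemma genUpperBoxDim_le_of_eventually_le {a : ℝ}
    (h : ∀ᶠ θ in 𝓝[>] (0 : ℝ), assouadSpectrum θ F ≤ a) : genUpperBoxDim F ≤ a :=
  limsup_le_of_le (isCoboundedUnder_le_of_le _ fun θ => assouadSpectrum_nonneg θ F) h

lemma genUpperBoxDim_le_of_coveringNumber_le (ht : 0 ≤ t) (hC : 0 < C)
    (h : ∀ ρ : ℝ, 0 < ρ → ρ < 1 → (coveringNumber ρ F : ℝ≥0∞) ≤ ENNReal.ofReal (C * ρ ^ (-t))) :
    genUpperBoxDim F ≤ t := by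
  have hlim : Tendsto (fun θ : ℝ => t / (1 - θ)) (𝓝[>] 0) (𝓝 t) := by
    have : ContinuousAt (fun θ : ℝ => t / (1 - θ)) 0 :=
      continuousAt_const.div (continuousAt_const.sub continuousAt_id) (by norm_num)
    simpa using this.tendsto.mono_left nhdsWithin_le_nhds
  refine le_of_forall_gt_imp_ge_of_dense fun a ha => genUpperBoxDim_le_of_eventually_le ?_
  filter_upwards [hlim.eventually_lt_const ha, Ioo_mem_nhdsGT one_pos] with θ hθa hθ
  have : 0 ≤ t / (1 - θ) := div_nonneg ht (by linarith [hθ.2])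
  exact (assouadSpectrum_le this (hasAssouadSpectrumBound_of_coveringNumber_le hθ hC h)).trans
    hθa.le

lemma genUpperBoxDim_le_of_packingPre₀_lt_one (hs : 0 ≤ s)
    (h : packingPre₀ s F < 1) : genUpperBoxDim F ≤ s :=
  let ⟨_, hC, hcov⟩ := exists_coveringNumber_le_of_packingPre₀_lt_one hs h
  genUpperBoxDim_le_of_coveringNumber_le hs hC hcov

lemma exists_cover_genUpperBoxDim_le_of_packingMeasure_eq_zero (hs : 0 ≤ s)
    (h : packingMeasure s F = 0) :
    ∃ G : ℕ → Set X, F ⊆ ⋃ i, G i ∧ ∀ i, genUpperBoxDim (G i) ≤ s := by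
  obtain ⟨G, hFG, hsum⟩ : ∃ G : ℕ → Set X, F ⊆ ⋃ i, G i ∧ ∑' i, packingPre₀ s (G i) < 1 := by
    simpa [packingMeasure, iInf_lt_iff] using h.trans_lt zero_lt_one
  exact ⟨G, hFG, fun i =>
    genUpperBoxDim_le_of_packingPre₀_lt_one hs ((ENNReal.le_tsum i).trans_lt hsum)⟩

end AssouadSpectrum

section CoveringBound

variable {s t C : ℝ} {E : Set X}

lemma card_le_coveringNumber_of_pairwiseDisjoint {ρ : ℝ} (hρ : 0 ≤ ρ) {P : Finset (X × ℝ)}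
    (hP : ∀ p ∈ P, p.1 ∈ E ∧ 2 * ρ < p.2)
    (hdisj : (P : Set (X × ℝ)).PairwiseDisjoint fun p => closedBall p.1 p.2) :
    (P.card : ℕ∞) ≤ coveringNumber ρ E := by
  classical
  -- in a metric space, disjoint closed balls only put each centre outside the other ball
  have hdist : ∀ p ∈ P, ∀ q ∈ P, p ≠ q → 2 * ρ < dist p.1 q.1 := by
    intro p hp q hq hpq
    have := disjoint_left.mp (hdisj hp hq hpq) (mem_closedBall_self (by linarith [(hP p hp).2]))
    rw [mem_closedBall, not_le] at this
    linarith [(hP q hq).2]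
  have hinj : InjOn Prod.fst (P : Set (X × ℝ)) := fun p hp q hq hpq => by
    by_contra hne
    have := hdist p hp q hq hne
    rw [hpq, dist_self] at this
    linarith
  rw [← Finset.card_image_of_injOn hinj]
  refine card_le_coveringNumber_of_separated hρ (fun x hx => ?_) ?_
  · obtain ⟨p, hp, rfl⟩ := Finset.mem_image.mp hx
    exact (hP p hp).1
  · rintro _ ha _ hb hab
    obtain ⟨p, hp, rfl⟩ := Finset.mem_image.mp ha
    obtain ⟨q, hq, rfl⟩ := Finset.mem_image.mp hb
    exact hdist p hp q hq fun h => hab (h ▸ rfl)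

lemma card_le_of_coveringNumber_le (hC : 0 ≤ C)
    (h : ∀ ρ : ℝ, 0 < ρ → ρ < 1 → (coveringNumber ρ E : ℝ≥0∞) ≤ ENNReal.ofReal (C * ρ ^ (-t)))
    {ρ : ℝ} (hρ : 0 < ρ) (hρ1 : ρ < 1) {P : Finset (X × ℝ)} (hP : ∀ p ∈ P, p.1 ∈ E ∧ 2 * ρ < p.2)
    (hdisj : (P : Set (X × ℝ)).PairwiseDisjoint fun p => closedBall p.1 p.2) :
    (P.card : ℝ) ≤ C * ρ ^ (-t) := by
  have := (ENat.toENNReal_le.mpr (card_le_coveringNumber_of_pairwiseDisjoint hρ.le hP hdisj)).trans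
    (h ρ hρ hρ1)
  rwa [ENat.toENNReal_coe, ← ENNReal.ofReal_natCast,
    ENNReal.ofReal_le_ofReal_iff (by positivity)] at this

lemma sum_pow_le_of_forall_le {q : ℝ} (hq0 : 0 ≤ q) (hq1 : q < 1) {m : ℕ} {S : Finset ℕ}
    (hS : ∀ k ∈ S, m ≤ k) : ∑ k ∈ S, q ^ k ≤ q ^ m / (1 - q) := by
  refine (Finset.sum_le_sum_of_subset_of_nonneg (fun k hk => ?_) fun k _ _ => by positivity).trans
    (geom_sum_Ico_le_of_lt_one (n := S.sup id + 1) hq0 hq1)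
  exact Finset.mem_Ico.mpr ⟨hS k hk, Nat.lt_succ_of_le (Finset.le_sup (f := id) hk)⟩

lemma dyadic_rpow_mul_rpow (k : ℕ) (s t : ℝ) :
    ((1 / 2 : ℝ) ^ (k + 2)) ^ (-t) * (2 ^ s * ((1 / 2 : ℝ) ^ k) ^ s) =
      4 ^ t * 2 ^ s * ((1 / 2 : ℝ) ^ (s - t)) ^ k := by
  have hx : (0 : ℝ) < (1 / 2) ^ k := by positivity
  rw [pow_add, Real.mul_rpow hx.le (by norm_num), Real.rpow_pow_comm (by norm_num) (s - t) k,
    Real.rpow_sub hx, Real.rpow_neg hx.le, Real.rpow_neg (by norm_num),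
    show ((1 / 2 : ℝ) ^ 2) = 4⁻¹ by norm_num, Real.inv_rpow (by norm_num), inv_inv]
  field_simp

lemma sum_rpow_le_of_coveringNumber_le (hs : 0 ≤ s) (hts : t < s) (hC : 0 ≤ C)
    (h : ∀ ρ : ℝ, 0 < ρ → ρ < 1 → (coveringNumber ρ E : ℝ≥0∞) ≤ ENNReal.ofReal (C * ρ ^ (-t)))
    (m : ℕ) {P : Finset (X × ℝ)} (hP : ∀ p ∈ P, p.1 ∈ E ∧ 0 < p.2 ∧ p.2 ≤ (1 / 2) ^ m)
    (hdisj : (P : Set (X × ℝ)).PairwiseDisjoint fun p => closedBall p.1 p.2) :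
    ∑ p ∈ P, (2 * p.2) ^ s ≤
      C * 4 ^ t * 2 ^ s * ((1 / 2 : ℝ) ^ (s - t)) ^ m / (1 - (1 / 2 : ℝ) ^ (s - t)) := by
  classical
  -- `κ p` is the dyadic scale of the radius of `p`; the balls of scale `k` are counted by
  -- `N_{(1/2)^(k+2)}(E)`, so the sum over scales `k ≥ m` is dominated by a geometric series.
  choose! κ hκ using fun p (hp : p ∈ P) => exists_nat_pow_near_of_lt_one (hP p hp).2.1
    ((hP p hp).2.2.trans (pow_le_one₀ (by norm_num) (by norm_num))) (by norm_num : (0 : ℝ) < 1 / 2)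
    (by norm_num : (1 / 2 : ℝ) < 1)
  have hκm : ∀ k ∈ P.image κ, m ≤ k := by
    simp only [Finset.mem_image, forall_exists_index, and_imp, forall_apply_eq_imp_iff₂]
    refine fun p hp => Nat.le_of_lt_succ ?_
    exact (pow_lt_pow_iff_right_of_lt_one₀ (by norm_num) (by norm_num)).mp
      ((hκ p hp).1.trans_le (hP p hp).2.2)
  have hfiber (k : ℕ) :
      (({p ∈ P | κ p = k} : Finset (X × ℝ)).card : ℝ) ≤ C * ((1 / 2 : ℝ) ^ (k + 2)) ^ (-t) := by
    refine card_le_of_coveringNumber_le hC h (by positivity)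
      (pow_lt_one₀ (by norm_num) (by norm_num) (by omega)) (fun p hp => ?_)
      (hdisj.subset (Finset.coe_subset.mpr (Finset.filter_subset _ _)))
    obtain ⟨hpP, rfl⟩ := Finset.mem_filter.mp hp
    refine ⟨(hP p hpP).1, ?_⟩
    calc 2 * (1 / 2 : ℝ) ^ (κ p + 2) = (1 / 2) ^ (κ p + 1) := by ring
      _ < p.2 := (hκ p hpP).1
  have hterm : ∀ p ∈ P, (2 * p.2) ^ s ≤ 2 ^ s * ((1 / 2 : ℝ) ^ κ p) ^ s := fun p hp => by
    rw [← Real.mul_rpow (by norm_num) (by positivity)]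
    exact Real.rpow_le_rpow (by linarith [(hP p hp).2.1]) (by linarith [(hκ p hp).2]) hs
  calc ∑ p ∈ P, (2 * p.2) ^ s
      = ∑ k ∈ P.image κ, ∑ p ∈ P with κ p = k, (2 * p.2) ^ s :=
        (Finset.sum_fiberwise_of_maps_to (fun p hp => Finset.mem_image_of_mem κ hp) _).symm
    _ ≤ ∑ k ∈ P.image κ,
          ({p ∈ P | κ p = k} : Finset (X × ℝ)).card * (2 ^ s * ((1 / 2 : ℝ) ^ k) ^ s) := by
        refine Finset.sum_le_sum fun k _ => ?_
        rw [← nsmul_eq_mul, ← Finset.sum_const]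
        refine Finset.sum_le_sum fun p hp => ?_
        obtain ⟨hpP, rfl⟩ := Finset.mem_filter.mp hp
        exact hterm p hpP
    _ ≤ ∑ k ∈ P.image κ, C * ((1 / 2 : ℝ) ^ (k + 2)) ^ (-t) * (2 ^ s * ((1 / 2 : ℝ) ^ k) ^ s) :=
        Finset.sum_le_sum fun k _ => mul_le_mul_of_nonneg_right (hfiber k) (by positivity)
    _ = C * 4 ^ t * 2 ^ s * ∑ k ∈ P.image κ, ((1 / 2 : ℝ) ^ (s - t)) ^ k := by
        rw [Finset.mul_sum]
        exact Finset.sum_congr rfl fun k _ => by rw [mul_assoc C, dyadic_rpow_mul_rpow]; ring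
    _ ≤ _ := by
        rw [mul_div_assoc]
        exact mul_le_mul_of_nonneg_left (sum_pow_le_of_forall_le (by positivity)
          (Real.rpow_lt_one (by norm_num) (by norm_num) (by linarith)) hκm) (by positivity)

lemma packingPre₀_eq_zero_of_coveringNumber_le (hs : 0 ≤ s) (hts : t < s) (hC : 0 ≤ C)
    (h : ∀ ρ : ℝ, 0 < ρ → ρ < 1 → (coveringNumber ρ E : ℝ≥0∞) ≤ ENNReal.ofReal (C * ρ ^ (-t))) :
    packingPre₀ s E = 0 := by
  set q : ℝ := (1 / 2) ^ (s - t)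
  have hq1 : q < 1 := Real.rpow_lt_one (by norm_num) (by norm_num) (by linarith)
  have hpre : ∀ m : ℕ, packingPre s ((1 / 2) ^ m) E ≤
      ENNReal.ofReal (C * 4 ^ t * 2 ^ s * q ^ m / (1 - q)) := fun m =>
    packingPre_le_of_forall_finset fun P hP hdisj => by
      rw [← ENNReal.ofReal_sum_of_nonneg fun p hp => by positivity [(hP p hp).2.1]]
      exact ENNReal.ofReal_le_ofReal (sum_rpow_le_of_coveringNumber_le hs hts hC h m hP hdisj)
  have hlim : Tendsto (fun m : ℕ => ENNReal.ofReal (C * 4 ^ t * 2 ^ s * q ^ m / (1 - q)))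
      atTop (𝓝 0) := by
    rw [← ENNReal.ofReal_zero]
    refine ENNReal.tendsto_ofReal ?_
    simpa using ((tendsto_pow_atTop_nhds_zero_of_lt_one (by positivity) hq1).const_mul
      (C * 4 ^ t * 2 ^ s)).div_const (1 - q)
  refine le_antisymm (ge_of_tendsto' hlim fun m => ?_) zero_le
  exact (iInf₂_le ((1 / 2) ^ m) (by positivity)).trans (hpre m)

end CoveringBound

lemma csInf_eq_csInf_of_forall_lt_mem_of_forall_exists_le {α : Type*}
    [ConditionallyCompleteLinearOrder α] [DenselyOrdered α] [NoMaxOrder α] {S P : Set α}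
    (hS : S.Nonempty) (hSb : BddBelow S) (hPb : BddBelow P)
    (hSP : ∀ a ∈ S, ∀ b, a < b → b ∈ P) (hPS : ∀ b ∈ P, ∃ a ∈ S, a ≤ b) : sInf P = sInf S := by
  obtain ⟨a₀, ha₀⟩ := hS
  obtain ⟨b₀, hb₀⟩ := exists_gt a₀
  refine le_antisymm (le_csInf ⟨a₀, ha₀⟩ fun a ha => le_of_forall_gt_imp_ge_of_dense fun b hab =>
    csInf_le hPb (hSP a ha b hab)) (le_csInf ⟨b₀, hSP a₀ ha₀ b₀ hb₀⟩ fun b hb => ?_)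
  obtain ⟨a, ha, hab⟩ := hPS b hb
  exact (csInf_le hSb ha).trans hab

section FiniteDimensional

open MeasureTheory Module

variable {V : Type*} [NormedAddCommGroup V] [NormedSpace ℝ V] [FiniteDimensional ℝ V]

lemma card_le_of_separated_subset_closedBall {x : V} {R r : ℝ} (hR : 0 ≤ R) (hr : 0 < r)
    {u : Finset V} (hu : ↑u ⊆ closedBall x R)
    (hsep : (u : Set V).Pairwise fun a b => r < dist a b) :
    (u.card : ℝ) ≤ (2 * R / r + 1) ^ finrank ℝ V := by
  borelize V
  set μ : Measure V := Measure.addHaar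
  have hdisj : (u : Set V).PairwiseDisjoint fun y => ball y (r / 2) := fun a ha b hb hab =>
    ball_disjoint_ball (by linarith [hsep ha hb hab])
  have hsub : ⋃ y ∈ u, ball y (r / 2) ⊆ ball x (R + r / 2) := iUnion₂_subset fun y hy =>
    ball_subset_ball' (by linarith [mem_closedBall.mp (hu hy)])
  have hvol : (u.card : ℝ≥0∞) * ENNReal.ofReal ((r / 2) ^ finrank ℝ V) * μ (ball 0 1) ≤
      ENNReal.ofReal ((R + r / 2) ^ finrank ℝ V) * μ (ball 0 1) :=
    calc _ = μ (⋃ y ∈ u, ball y (r / 2)) := by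
          rw [measure_biUnion_finset hdisj fun _ _ => measurableSet_ball]
          simp [μ.addHaar_ball_of_pos _ (half_pos hr), mul_assoc]
      _ ≤ μ (ball x (R + r / 2)) := measure_mono hsub
      _ = _ := μ.addHaar_ball_of_pos _ (by positivity)
  have := (ENNReal.mul_le_mul_iff_left (measure_ball_pos μ 0 one_pos).ne'
    measure_ball_lt_top.ne).mp hvol
  rw [← ENNReal.ofReal_natCast, ← ENNReal.ofReal_mul (by positivity),
    ENNReal.ofReal_le_ofReal_iff (by positivity)] at this
  calc (u.card : ℝ) ≤ (R + r / 2) ^ finrank ℝ V / (r / 2) ^ finrank ℝ V := by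
        rwa [le_div_iff₀ (by positivity)]
    _ = _ := by rw [← div_pow]; congr 1; field_simp

lemma exists_finset_cover_of_subset_closedBall {A : Set V} {x : V} {R r : ℝ}
    (hA : A ⊆ closedBall x R) (hR : 0 ≤ R) (hr : 0 < r) :
    ∃ t : Finset V, ↑t ⊆ A ∧ A ⊆ ⋃ y ∈ t, closedBall y r ∧
      (t.card : ℝ) ≤ (2 * R / r + 1) ^ finrank ℝ V :=
  exists_finset_subset_cover_card_le hr.le fun _ hu hsep =>
    card_le_of_separated_subset_closedBall hR hr (hu.trans hA) hsep

lemma hasAssouadSpectrumBound_finrank {θ : ℝ} (hθ : θ ∈ Ioo 0 1) (F : Set V) :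
    HasAssouadSpectrumBound θ (finrank ℝ V) F := by
  refine ⟨3 ^ finrank ℝ V, by positivity, fun R hR0 hR1 x _ => ?_⟩
  have hr : 0 < R ^ (1 / θ) := by positivity
  have hRr : 1 ≤ R / R ^ (1 / θ) := one_le_div_rpow_one_div hθ ⟨hR0, hR1⟩
  obtain ⟨t, -, ht, hcard⟩ :=
    exists_finset_cover_of_subset_closedBall (A := closedBall x R ∩ F) inter_subset_left hR0.le hr
  refine (coveringNumber_le_ofReal_iff (by positivity)).mpr ⟨t, ht, hcard.trans ?_⟩
  rw [Real.rpow_natCast, ← mul_pow, mul_div_assoc]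
  gcongr
  linarith

lemma assouadSpectrum_le_finrank {θ : ℝ} (hθ : θ ∈ Ioo 0 1) (F : Set V) :
    assouadSpectrum θ F ≤ finrank ℝ V :=
  assouadSpectrum_le (Nat.cast_nonneg _) (hasAssouadSpectrumBound_finrank hθ F)

lemma genUpperBoxDim_le_finrank (F : Set V) : genUpperBoxDim F ≤ finrank ℝ V :=
  genUpperBoxDim_le_of_eventually_le <|
    eventually_of_mem (Ioo_mem_nhdsGT one_pos) fun _ hθ => assouadSpectrum_le_finrank hθ F

lemma eventually_hasAssouadSpectrumBound_of_genUpperBoxDim_lt {F : Set V} {s : ℝ}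
    (h : genUpperBoxDim F < s) :
    ∀ᶠ θ in 𝓝[>] (0 : ℝ), θ ∈ Ioo 0 1 ∧ HasAssouadSpectrumBound θ s F := by
  have hbdd : IsBoundedUnder (· ≤ ·) (𝓝[>] (0 : ℝ)) fun θ => assouadSpectrum θ F :=
    ⟨finrank ℝ V, eventually_map.mpr <|
      eventually_of_mem (Ioo_mem_nhdsGT one_pos) fun _ hθ => assouadSpectrum_le_finrank hθ F⟩
  filter_upwards [eventually_lt_of_limsup_lt h hbdd, Ioo_mem_nhdsGT one_pos] with θ hθs hθ
  have hne : {s | 0 ≤ s ∧ HasAssouadSpectrumBound θ s F}.Nonempty :=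
    ⟨_, Nat.cast_nonneg _, hasAssouadSpectrumBound_finrank hθ F⟩
  rw [assouadSpectrum_eq_sInf] at hθs
  obtain ⟨s', ⟨-, hs'⟩, hs's⟩ := exists_lt_of_csInf_lt hne hθs
  exact ⟨hθ, hs'.mono hθ hs's.le⟩

lemma HasAssouadSpectrumBound.coveringNumber_inter_closedBall_le {E : Set V} {θ s : ℝ}
    (hθ : θ ∈ Ioo 0 1) (h : HasAssouadSpectrumBound θ s E) (x₀ : V) {r₀ : ℝ} (hr₀ : 0 ≤ r₀) :
    ∃ C > 0, ∀ ρ : ℝ, 0 < ρ → ρ < 1 → (coveringNumber ρ (E ∩ closedBall x₀ r₀) : ℝ≥0∞) ≤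
      ENNReal.ofReal (C * ρ ^ (-(θ * finrank ℝ V + (1 - θ) * s))) := by
  obtain ⟨C, hC, hbound⟩ := h
  refine ⟨(2 * r₀ + 1) ^ finrank ℝ V * C, by positivity, fun ρ hρ0 hρ1 => ?_⟩
  -- at `R = ρ ^ θ` the spectrum bound covers `R`-balls centred in `E` by `ρ`-balls
  set R := ρ ^ θ
  have hR0 : 0 < R := by positivity
  have hR1 : R < 1 := Real.rpow_lt_one hρ0.le hρ1 hθ.1
  have hRρ : R ^ (1 / θ) = ρ := by
    rw [← Real.rpow_mul hρ0.le, mul_one_div_cancel hθ.1.ne', Real.rpow_one]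
  obtain ⟨t, htE, hcov, hcard⟩ := exists_finset_cover_of_subset_closedBall
    (inter_subset_right : E ∩ closedBall x₀ r₀ ⊆ _) hr₀ hR0
  have hpiece : ∀ y ∈ t, (coveringNumber ρ (closedBall y R ∩ E) : ℝ≥0∞) ≤
      ENNReal.ofReal (C * (R / ρ) ^ s) := fun y hy => by
    rw [← hRρ]
    exact hbound R hR0 hR1 y (htE hy).1
  have hcover : E ∩ closedBall x₀ r₀ ⊆ ⋃ y ∈ t, closedBall y R ∩ E := fun z hz => by
    obtain ⟨y, hy, hzy⟩ := mem_iUnion₂.mp (hcov hz)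
    exact mem_iUnion₂.mpr ⟨y, hy, hzy, hz.1⟩
  refine (coveringNumber_le_card_mul (by positivity) hcover hpiece).trans
    (ENNReal.ofReal_le_ofReal ?_)
  have hnet : 2 * r₀ / R + 1 ≤ (2 * r₀ + 1) / R := by
    rw [add_div]
    gcongr
    exact one_le_one_div hR0 hR1.le
  calc (t.card : ℝ) * (C * (R / ρ) ^ s)
      ≤ ((2 * r₀ + 1) / R) ^ finrank ℝ V * (C * (R / ρ) ^ s) := by
        gcongr
        exact hcard.trans (pow_le_pow_left₀ (by positivity) hnet _)
    _ = _ := by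
        have hRn : R ^ finrank ℝ V = ρ ^ (θ * finrank ℝ V) := by
          rw [← Real.rpow_natCast, ← Real.rpow_mul hρ0.le]
        have hRρ : (R / ρ) ^ s = ρ ^ ((θ - 1) * s) := by
          rw [Real.rpow_mul hρ0.le, Real.rpow_sub_one hρ0.ne']
        rw [div_pow, hRn, hRρ, Real.rpow_neg hρ0.le,
          show θ * finrank ℝ V + (1 - θ) * s = θ * finrank ℝ V - (θ - 1) * s by ring,
          Real.rpow_sub hρ0]
        field_simp

lemma packingPre₀_inter_closedBall_eq_zero {E : Set V} {s : ℝ} (h : genUpperBoxDim E < s)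
    (x₀ : V) {r₀ : ℝ} (hr₀ : 0 ≤ r₀) : packingPre₀ s (E ∩ closedBall x₀ r₀) = 0 := by
  obtain ⟨s₁, hEs₁, hs₁s⟩ := exists_between h
  have hs₁ : 0 ≤ s₁ := (genUpperBoxDim_nonneg E).trans hEs₁.le
  have hlim : Tendsto (fun θ : ℝ => θ * finrank ℝ V + (1 - θ) * s₁) (𝓝[>] 0) (𝓝 s₁) := by
    have : Continuous fun θ : ℝ => θ * finrank ℝ V + (1 - θ) * s₁ := by fun_prop
    simpa using this.continuousAt.tendsto.mono_left (nhdsWithin_le_nhds (a := 0))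
  obtain ⟨θ, ⟨hθ, hbound⟩, hθs⟩ :=
    ((eventually_hasAssouadSpectrumBound_of_genUpperBoxDim_lt hEs₁).and
      (hlim.eventually_lt_const hs₁s)).exists
  obtain ⟨C, hC, hcov⟩ := hbound.coveringNumber_inter_closedBall_le hθ x₀ hr₀
  exact packingPre₀_eq_zero_of_coveringNumber_le (hs₁.trans hs₁s.le) hθs hC.le hcov

lemma packingMeasure_eq_zero_of_forall_genUpperBoxDim_lt {F : Set V} {G : ℕ → Set V}
    (hF : F ⊆ ⋃ i, G i) {s : ℝ} (hG : ∀ i, genUpperBoxDim (G i) < s) :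
    packingMeasure s F = 0 := by
  -- the covering-number bounds are only available on bounded pieces
  set H : ℕ → Set V := fun j => G j.unpair.1 ∩ closedBall 0 j.unpair.2
  have hFH : F ⊆ ⋃ j, H j := fun x hx => by
    obtain ⟨i, hi⟩ := mem_iUnion.mp (hF hx)
    obtain ⟨n, hn⟩ := exists_nat_ge ‖x‖
    exact mem_iUnion.mpr ⟨Nat.pair i n, by simpa [H] using ⟨hi, hn⟩⟩
  refine le_antisymm ((iInf₂_le H hFH).trans_eq ?_) zero_le
  simp [H, packingPre₀_inter_closedBall_eq_zero (hG _) 0 (Nat.cast_nonneg _)]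

theorem packingDim_eq_sInf_iSup_genUpperBoxDim (F : Set V) :
    packingDim F =
      sInf {a : ℝ | ∃ G : ℕ → Set V, (F ⊆ ⋃ i, G i) ∧ a = ⨆ i, genUpperBoxDim (G i)} := by
  have hnonneg (G : ℕ → Set V) : 0 ≤ ⨆ i, genUpperBoxDim (G i) :=
    Real.iSup_nonneg fun i => genUpperBoxDim_nonneg (G i)
  refine csInf_eq_csInf_of_forall_lt_mem_of_forall_exists_le
    ⟨_, fun _ => univ, fun x _ => mem_iUnion.mpr ⟨0, trivial⟩, rfl⟩
    ⟨0, by rintro _ ⟨G, -, rfl⟩; exact hnonneg G⟩ ⟨0, fun _ h => h.1⟩ ?_ ?_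
  · rintro _ ⟨G, hFG, rfl⟩ b hb
    have hbdd : BddAbove (range fun i => genUpperBoxDim (G i)) :=
      ⟨finrank ℝ V, forall_mem_range.mpr fun i => genUpperBoxDim_le_finrank (G i)⟩
    exact ⟨(hnonneg G).trans hb.le, packingMeasure_eq_zero_of_forall_genUpperBoxDim_lt hFG
      fun i => (le_ciSup hbdd i).trans_lt hb⟩
  · rintro b ⟨hb, hFb⟩
    obtain ⟨G, hFG, hG⟩ := exists_cover_genUpperBoxDim_le_of_packingMeasure_eq_zero hb hFb
    exact ⟨_, ⟨G, hFG, rfl⟩, ciSup_le hG⟩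

end FiniteDimensional

/-- The packing dimension equals the modified generalized upper box dimension
`\overline{dim}_{MGB} F := inf { sup_i \overline{dim}_{GB} F_i : F ⊆ ⋃_i F_i }`. -/
theorem packingDim_eq_modifiedGenUpperBoxDim
    (d : ℕ) (F : Set (EuclideanSpace ℝ (Fin d))) :
    packingDim F = sInf {a : ℝ | ∃ G : ℕ → Set (EuclideanSpace ℝ (Fin d)),
        (F ⊆ ⋃ i, G i) ∧ a = ⨆ i, genUpperBoxDim (G i)} :=
  packingDim_eq_sInf_iSup_genUpperBoxDim F

end
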